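/- arXiv:1505.01773 — 3 statements merged into one kernel-verified Lean document; each statement's English description precedes it below -/
import Mathlib

section
/- For all r* ∈ ℝ and all ξ₁, ξ₂ ∈ ℂ with Im ξ₁ ≤ r* and Im ξ₂ ≤ r*, one has |G(ξ₁) − G(ξ₂)| ≥ (1 − e^{k(r* − d)}) · |ξ₁ − ξ₂|. -/
open Complex in
/-- `G(ξ) = ξ + (i/k) e^{−kd} e^{ik ξ̄}`, encoding the (x,z)-components of the
time-0 Lagrangian flow map at a fixed latitude. -/
noncomputable def G (k d : ℝ) (ξ : ℂ) : ℂ :=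
  ξ + (Complex.I / (k : ℂ)) * (Real.exp (-(k * d)) : ℂ) *
      Complex.exp (Complex.I * (k : ℂ) * (starRingEnd ℂ ξ))

open Complex in
lemma exp_lip (k : ℝ) (hk : 0 < k) (rstar : ℝ) (w₁ w₂ : ℂ)
    (h₁ : -rstar ≤ w₁.im) (h₂ : -rstar ≤ w₂.im) :
    ‖Complex.exp (Complex.I * (k : ℂ) * w₁) - Complex.exp (Complex.I * (k : ℂ) * w₂)‖
      ≤ (k * Real.exp (k * rstar)) * ‖w₁ - w₂‖ := by
  set s : Set ℂ := {w : ℂ | -rstar ≤ w.im}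
  have hconv : Convex ℝ s := convex_halfSpace_im_ge (-rstar)
  have hder : ∀ w ∈ s, HasDerivWithinAt (fun w => Complex.exp (Complex.I * (k : ℂ) * w))
      ((Complex.I * (k : ℂ)) * Complex.exp (Complex.I * (k : ℂ) * w)) s w := by
    intro w hw
    have : HasDerivAt (fun w => Complex.exp (Complex.I * (k : ℂ) * w))
        (Complex.exp (Complex.I * (k : ℂ) * w) * (Complex.I * (k : ℂ))) w := by
      have h1 : HasDerivAt (fun w : ℂ => Complex.I * (k : ℂ) * w) (Complex.I * (k : ℂ)) w := by
        simpa using (hasDerivAt_id w).const_mul (Complex.I * (k : ℂ))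
      exact h1.cexp
    exact (this.hasDerivWithinAt).congr_deriv (by ring)
  have hbound : ∀ w ∈ s, ‖(Complex.I * (k : ℂ)) * Complex.exp (Complex.I * (k : ℂ) * w)‖
      ≤ k * Real.exp (k * rstar) := by
    intro w hw
    rw [norm_mul]
    simp only [Complex.norm_exp]
    have h1 : ‖Complex.I * (k : ℂ)‖ = k := by
      simp [map_mul, abs_of_pos hk]
    rw [h1]
    have h2 : (Complex.I * (k : ℂ) * w).re = -(k * w.im) := by
      simp [Complex.mul_re, Complex.mul_im]
    rw [h2]
    have : -(k * w.im) ≤ k * rstar := by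
      have := mul_le_mul_of_nonneg_left hw hk.le
      nlinarith
    exact mul_le_mul_of_nonneg_left (Real.exp_le_exp.2 this) hk.le
  exact hconv.norm_image_sub_le_of_norm_hasDerivWithin_le hder hbound h₂ h₁

/-- for all `r*` and all `ξ₁, ξ₂` with `Im ξᵢ ≤ r*`,
`|G(ξ₁) − G(ξ₂)| ≥ (1 − e^{k(r* − d)}) |ξ₁ − ξ₂|`. -/
theorem stmt3 (k d : ℝ) (hk : 0 < k) (hd : 0 ≤ d)
    (rstar : ℝ) (ξ₁ ξ₂ : ℂ) (h₁ : ξ₁.im ≤ rstar) (h₂ : ξ₂.im ≤ rstar) :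
    ‖G k d ξ₁ - G k d ξ₂‖ ≥ (1 - Real.exp (k * (rstar - d))) * ‖ξ₁ - ξ₂‖ := by
  set c : ℂ := Complex.I / (k : ℂ) * (Real.exp (-(k * d)) : ℂ)
  set f₁ := Complex.exp (Complex.I * (k : ℂ) * (starRingEnd ℂ ξ₁))
  set f₂ := Complex.exp (Complex.I * (k : ℂ) * (starRingEnd ℂ ξ₂))
  have hGdiff : G k d ξ₁ - G k d ξ₂ = (ξ₁ - ξ₂) + c * (f₁ - f₂) := by
    simp only [G, c, f₁, f₂]; ring
  have hc : ‖c‖ = Real.exp (-(k * d)) / k := by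
    simp [c, norm_div, norm_mul, Complex.norm_real, abs_of_pos hk,
      abs_of_pos (Real.exp_pos _), Real.abs_exp]
    rw [Complex.norm_exp]
    simp
    ring
  have hlip : ‖f₁ - f₂‖ ≤ (k * Real.exp (k * rstar)) * ‖ξ₁ - ξ₂‖ := by
    have := exp_lip k hk rstar (starRingEnd ℂ ξ₁) (starRingEnd ℂ ξ₂)
      (by simpa using neg_le_neg h₁) (by simpa using neg_le_neg h₂)
    calc ‖f₁ - f₂‖ ≤ (k * Real.exp (k * rstar)) * ‖starRingEnd ℂ ξ₁ - starRingEnd ℂ ξ₂‖ := this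
    _ = (k * Real.exp (k * rstar)) * ‖ξ₁ - ξ₂‖ := by
        rw [← map_sub, Complex.norm_conj]
  have hcf : ‖c * (f₁ - f₂)‖ ≤ Real.exp (k * (rstar - d)) * ‖ξ₁ - ξ₂‖ := by
    rw [norm_mul, hc]
    calc Real.exp (-(k * d)) / k * ‖f₁ - f₂‖
        ≤ Real.exp (-(k * d)) / k * ((k * Real.exp (k * rstar)) * ‖ξ₁ - ξ₂‖) := by
          apply mul_le_mul_of_nonneg_left hlip (by positivity)
      _ = Real.exp (k * (rstar - d)) * ‖ξ₁ - ξ₂‖ := by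
          have harg : k * (rstar - d) = -(k * d) + k * rstar := by ring
          rw [harg, Real.exp_add]
          field_simp
  calc ‖G k d ξ₁ - G k d ξ₂‖ = ‖(ξ₁ - ξ₂) + c * (f₁ - f₂)‖ := by rw [hGdiff]
    _ ≥ ‖ξ₁ - ξ₂‖ - ‖c * (f₁ - f₂)‖ := by
        have := norm_sub_le (ξ₁ - ξ₂ + c * (f₁ - f₂)) (c * (f₁ - f₂))
        simp only [add_sub_cancel_right] at this
        linarith
    _ ≥ (1 - Real.exp (k * (rstar - d))) * ‖ξ₁ - ξ₂‖ := by nlinarith [norm_nonneg (ξ₁ - ξ₂)]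
end

section
/- Let r₀ < 0. Then the map Φ is injective on the set S = {(q,r,s) ∈ ℝ³ : r ≤ r₀}, and at every point of S its derivative is a linear isomorphism of ℝ³; hence Φ restricted to S is an injective local diffeomorphism onto its image. -/
/-- Time-0 Lagrangian flow map `Φ(q,r,s)`. -/
noncomputable def Phi (k lam : ℝ) (p : Fin 3 → ℝ) : Fin 3 → ℝ :=
  ![p 0 - (1 / k) * Real.exp (k * (p 1 - lam * (p 2) ^ 2)) * Real.sin (k * p 0),
    p 2,
    p 1 + (1 / k) * Real.exp (k * (p 1 - lam * (p 2) ^ 2)) * Real.cos (k * p 0)]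

/-- Auxiliary: squared Lipschitz bound for `exp` on `(-∞, m]`. -/
lemma exp_diff_sq_le {x y m : ℝ} (hx : x ≤ m) (hy : y ≤ m) :
    (Real.exp x - Real.exp y) ^ 2 ≤ (Real.exp m) ^ 2 * (x - y) ^ 2 := by
  wlog hxy : y ≤ x generalizing x y
  · have h2 := this hy hx (le_of_not_ge hxy)
    nlinarith [h2]
  · have h2 : (y - x) + 1 ≤ Real.exp (y - x) := Real.add_one_le_exp _
    have h3 : Real.exp y = Real.exp x * Real.exp (y - x) := by
      rw [← Real.exp_add]; ring_nf
    have h4 : Real.exp x * ((y - x) + 1) ≤ Real.exp y := by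
      rw [h3]; exact mul_le_mul_of_nonneg_left h2 (Real.exp_pos x).le
    have h5 : Real.exp x ≤ Real.exp m := Real.exp_le_exp.mpr hx
    have h1 : Real.exp x - Real.exp y ≤ Real.exp m * (x - y) := by
      nlinarith [Real.exp_pos x, sub_nonneg.mpr hxy]
    have h0 : 0 ≤ Real.exp x - Real.exp y := sub_nonneg.mpr (Real.exp_le_exp.mpr hxy)
    nlinarith [h1, h0, mul_nonneg (Real.exp_pos m).le (sub_nonneg.mpr hxy)]

/-- Auxiliary contraction estimate. -/
lemma contraction_aux {θ D a b c x : ℝ} (hc0 : 0 < c) (hc1 : c < 1)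
    (hkey : θ ^ 2 + D ^ 2 = a ^ 2 + b ^ 2 - 2 * a * b * x)
    (habd : (a - b) ^ 2 ≤ c ^ 2 * D ^ 2)
    (hint1 : 0 ≤ a * b * (x - (1 - θ ^ 2 / 2)))
    (hint2 : 0 ≤ (c ^ 2 - a * b) * θ ^ 2) : θ = 0 ∧ D = 0 := by
  have hsum : θ ^ 2 + D ^ 2 ≤ c ^ 2 * (θ ^ 2 + D ^ 2) := by
    linarith [hkey, habd, hint1, hint2]
  have hc2 : c ^ 2 < 1 := by nlinarith
  have hle : θ ^ 2 + D ^ 2 ≤ 0 := by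
    nlinarith [hsum, sq_nonneg θ, sq_nonneg D]
  constructor
  · have h : θ ^ 2 = 0 := le_antisymm (by nlinarith [sq_nonneg D]) (sq_nonneg _)
    exact pow_eq_zero_iff (two_ne_zero) |>.mp h
  · have h : D ^ 2 = 0 := le_antisymm (by nlinarith [sq_nonneg θ]) (sq_nonneg _)
    exact pow_eq_zero_iff (two_ne_zero) |>.mp h

/-- A row of the Jacobian, as a continuous linear functional. -/
noncomputable def row3 (a b c : ℝ) : (Fin 3 → ℝ) →L[ℝ] ℝ :=
  a • (ContinuousLinearMap.proj 0 : (Fin 3 → ℝ) →L[ℝ] ℝ)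
    + b • (ContinuousLinearMap.proj 1 : (Fin 3 → ℝ) →L[ℝ] ℝ)
    + c • (ContinuousLinearMap.proj 2 : (Fin 3 → ℝ) →L[ℝ] ℝ)

/-- The Jacobian, as a continuous linear map. -/
noncomputable def Lmat (r₁ r₂ r₃ : (Fin 3 → ℝ) →L[ℝ] ℝ) :
    (Fin 3 → ℝ) →L[ℝ] (Fin 3 → ℝ) :=
  ContinuousLinearMap.pi ![r₁, r₂, r₃]

lemma Lmat_inj {E C S g0 g2 : ℝ} (hE0 : 0 < E) (hE1 : E < 1)
    (hCS : S ^ 2 + C ^ 2 = 1) (hC : -1 ≤ C) :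
    Function.Injective
      ⇑(Lmat (row3 (1 - E * C) (-(E * S)) g0) (row3 0 0 1)
            (row3 (-(E * S)) (1 + E * C) g2)) := by
  set L := Lmat (row3 (1 - E * C) (-(E * S)) g0) (row3 0 0 1)
      (row3 (-(E * S)) (1 + E * C) g2) with hL
  have key : ∀ u : Fin 3 → ℝ, L u = 0 → u = 0 := by
    intro u hu
    have h0 := congrFun hu 0
    have h1 := congrFun hu 1
    have h2 := congrFun hu 2
    simp only [hL, Lmat, ContinuousLinearMap.pi_apply, row3, Matrix.cons_val_zero,
      Matrix.cons_val_one, Matrix.head_cons, Matrix.cons_val_two, Matrix.tail_cons,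
      ContinuousLinearMap.add_apply, ContinuousLinearMap.smul_apply,
      ContinuousLinearMap.proj_apply, smul_eq_mul, Pi.zero_apply] at h0 h1 h2
    have hu2 : u 2 = 0 := by linarith
    rw [hu2] at h0 h2
    have hE2 : (1 : ℝ) - E ^ 2 > 0 := by nlinarith
    have hk0 : (1 - E ^ 2) * u 0 = 0 := by
      linear_combination (1 + E * C) * h0 + E * S * h2 + E ^ 2 * u 0 * hCS
    have hu0 : u 0 = 0 := by
      rcases mul_eq_zero.mp hk0 with h | h
      · linarith
      · exact h
    have hEC : 0 < 1 + E * C := by nlinarith [mul_le_mul_of_nonneg_left hC hE0.le]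
    have hu1 : u 1 = 0 := by
      rw [hu0] at h2
      have : (1 + E * C) * u 1 = 0 := by linarith
      rcases mul_eq_zero.mp this with h | h
      · linarith
      · exact h
    funext i
    fin_cases i
    exacts [hu0, hu1, hu2]
  intro v w hvw
  have h1 : L (v - w) = 0 := by rw [map_sub, hvw, sub_self]
  exact sub_eq_zero.mp (key _ h1)

lemma phi_hasFDeriv (k lam : ℝ) (hk : k ≠ 0) (p : Fin 3 → ℝ) :
    HasFDerivAt (Phi k lam)
      (Lmat
        (row3 (1 - Real.exp (k * (p 1 - lam * (p 2) ^ 2)) * Real.cos (k * p 0))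
              (-(Real.exp (k * (p 1 - lam * (p 2) ^ 2)) * Real.sin (k * p 0)))
              (2 * lam * p 2 * (Real.exp (k * (p 1 - lam * (p 2) ^ 2)) * Real.sin (k * p 0))))
        (row3 0 0 1)
        (row3 (-(Real.exp (k * (p 1 - lam * (p 2) ^ 2)) * Real.sin (k * p 0)))
              (1 + Real.exp (k * (p 1 - lam * (p 2) ^ 2)) * Real.cos (k * p 0))
              (-(2 * lam * p 2 * (Real.exp (k * (p 1 - lam * (p 2) ^ 2)) * Real.cos (k * p 0)))))) p := by
  have hx0 : HasFDerivAt (fun x : Fin 3 → ℝ => x 0)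
      (ContinuousLinearMap.proj 0 : (Fin 3 → ℝ) →L[ℝ] ℝ) p :=
    (ContinuousLinearMap.proj 0 : (Fin 3 → ℝ) →L[ℝ] ℝ).hasFDerivAt
  have hx1 : HasFDerivAt (fun x : Fin 3 → ℝ => x 1)
      (ContinuousLinearMap.proj 1 : (Fin 3 → ℝ) →L[ℝ] ℝ) p :=
    (ContinuousLinearMap.proj 1 : (Fin 3 → ℝ) →L[ℝ] ℝ).hasFDerivAt
  have hx2 : HasFDerivAt (fun x : Fin 3 → ℝ => x 2)
      (ContinuousLinearMap.proj 2 : (Fin 3 → ℝ) →L[ℝ] ℝ) p :=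
    (ContinuousLinearMap.proj 2 : (Fin 3 → ℝ) →L[ℝ] ℝ).hasFDerivAt
  have hq := hx0.const_mul k
  have hsin := hq.sin
  have hcos := hq.cos
  have hsq : HasFDerivAt (fun x : Fin 3 → ℝ => x 2 ^ 2)
      ((p 2 : ℝ) • (ContinuousLinearMap.proj 2 : (Fin 3 → ℝ) →L[ℝ] ℝ)
        + (p 2 : ℝ) • (ContinuousLinearMap.proj 2 : (Fin 3 → ℝ) →L[ℝ] ℝ)) p := by
    simpa only [pow_two, Pi.mul_def] using hx2.mul hx2
  have hin := ((hx1.sub (hsq.const_mul lam)).const_mul k)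
  have hexp := hin.exp
  have hmul0 := (hexp.const_mul (1 / k)).mul hsin
  have hmul2 := (hexp.const_mul (1 / k)).mul hcos
  have c0 : HasFDerivAt (fun x => Phi k lam x 0)
      ((ContinuousLinearMap.proj 0).comp
        (Lmat
          (row3 (1 - Real.exp (k * (p 1 - lam * (p 2) ^ 2)) * Real.cos (k * p 0))
                (-(Real.exp (k * (p 1 - lam * (p 2) ^ 2)) * Real.sin (k * p 0)))
                (2 * lam * p 2 * (Real.exp (k * (p 1 - lam * (p 2) ^ 2)) * Real.sin (k * p 0))))
          (row3 0 0 1)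
          (row3 (-(Real.exp (k * (p 1 - lam * (p 2) ^ 2)) * Real.sin (k * p 0)))
                (1 + Real.exp (k * (p 1 - lam * (p 2) ^ 2)) * Real.cos (k * p 0))
                (-(2 * lam * p 2 * (Real.exp (k * (p 1 - lam * (p 2) ^ 2)) * Real.cos (k * p 0))))))) p := by
    rw [Lmat, ContinuousLinearMap.proj_pi, Matrix.cons_val_zero]
    refine HasFDerivAt.congr_fderiv (hx0.sub hmul0) (ContinuousLinearMap.ext fun v => ?_)
    simp only [row3, ContinuousLinearMap.sub_apply, ContinuousLinearMap.add_apply,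
      ContinuousLinearMap.coe_smul', Pi.smul_apply, ContinuousLinearMap.proj_apply,
      smul_eq_mul, ContinuousLinearMap.smul_apply, ContinuousLinearMap.coe_sub',
      Pi.sub_apply]
    field_simp
    ring
  have c1 : HasFDerivAt (fun x => Phi k lam x 1)
      ((ContinuousLinearMap.proj 1).comp
        (Lmat
          (row3 (1 - Real.exp (k * (p 1 - lam * (p 2) ^ 2)) * Real.cos (k * p 0))
                (-(Real.exp (k * (p 1 - lam * (p 2) ^ 2)) * Real.sin (k * p 0)))
                (2 * lam * p 2 * (Real.exp (k * (p 1 - lam * (p 2) ^ 2)) * Real.sin (k * p 0))))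
          (row3 0 0 1)
          (row3 (-(Real.exp (k * (p 1 - lam * (p 2) ^ 2)) * Real.sin (k * p 0)))
                (1 + Real.exp (k * (p 1 - lam * (p 2) ^ 2)) * Real.cos (k * p 0))
                (-(2 * lam * p 2 * (Real.exp (k * (p 1 - lam * (p 2) ^ 2)) * Real.cos (k * p 0))))))) p := by
    rw [Lmat, ContinuousLinearMap.proj_pi, Matrix.cons_val_one, Matrix.cons_val_zero]
    refine HasFDerivAt.congr_fderiv hx2 (ContinuousLinearMap.ext fun v => ?_)
    simp only [row3, ContinuousLinearMap.add_apply, ContinuousLinearMap.smul_apply,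
      ContinuousLinearMap.proj_apply, smul_eq_mul]
    ring
  have c2 : HasFDerivAt (fun x => Phi k lam x 2)
      ((ContinuousLinearMap.proj 2).comp
        (Lmat
          (row3 (1 - Real.exp (k * (p 1 - lam * (p 2) ^ 2)) * Real.cos (k * p 0))
                (-(Real.exp (k * (p 1 - lam * (p 2) ^ 2)) * Real.sin (k * p 0)))
                (2 * lam * p 2 * (Real.exp (k * (p 1 - lam * (p 2) ^ 2)) * Real.sin (k * p 0))))
          (row3 0 0 1)
          (row3 (-(Real.exp (k * (p 1 - lam * (p 2) ^ 2)) * Real.sin (k * p 0)))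
                (1 + Real.exp (k * (p 1 - lam * (p 2) ^ 2)) * Real.cos (k * p 0))
                (-(2 * lam * p 2 * (Real.exp (k * (p 1 - lam * (p 2) ^ 2)) * Real.cos (k * p 0))))))) p := by
    rw [Lmat, ContinuousLinearMap.proj_pi, Matrix.cons_val_two, Matrix.tail_cons, Matrix.head_cons]
    refine HasFDerivAt.congr_fderiv (hx1.add hmul2) (ContinuousLinearMap.ext fun v => ?_)
    simp only [row3, ContinuousLinearMap.sub_apply, ContinuousLinearMap.add_apply,
      ContinuousLinearMap.coe_smul', Pi.smul_apply, ContinuousLinearMap.proj_apply,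
      smul_eq_mul, ContinuousLinearMap.smul_apply, ContinuousLinearMap.coe_sub',
      Pi.sub_apply]
    field_simp
    ring
  apply hasFDerivAt_pi''
  intro i
  fin_cases i
  exacts [c0, c1, c2]

/-- for `r₀ < 0`, `Φ` is injective on `S = {r ≤ r₀}` and its
derivative at every point of `S` is a linear isomorphism of ℝ³; hence `Φ`
restricted to `S` is an injective local diffeomorphism onto its image. -/
theorem stmt6 (k lam r₀ : ℝ) (hk : 0 < k) (hlam : 0 ≤ lam) (hr₀ : r₀ < 0) :
    Set.InjOn (Phi k lam) {p : Fin 3 → ℝ | p 1 ≤ r₀} ∧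
    ∀ p : Fin 3 → ℝ, p 1 ≤ r₀ →
      ∃ A : (Fin 3 → ℝ) ≃L[ℝ] (Fin 3 → ℝ),
        HasFDerivAt (Phi k lam) (A : (Fin 3 → ℝ) →L[ℝ] (Fin 3 → ℝ)) p := by
  constructor
  · -- injectivity on `S`
    have hc0 : (0:ℝ) < Real.exp (k * r₀) := Real.exp_pos _
    have hc1 : Real.exp (k * r₀) < 1 :=
      Real.exp_lt_one_iff.mpr (mul_neg_of_pos_of_neg hk hr₀)
    intro p hp p' hp' h
    simp only [Set.mem_setOf_eq] at hp hp'
    have e0 := congrFun h 0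
    have e1 := congrFun h 1
    have e2 := congrFun h 2
    simp only [Phi, Matrix.cons_val_zero, Matrix.cons_val_one, Matrix.head_cons,
      Matrix.cons_val_two, Matrix.tail_cons] at e0 e1 e2
    rw [← e1] at e0 e2
    have hpa : k * (p 1 - lam * p 2 ^ 2) ≤ k * r₀ := by
      have : p 1 - lam * p 2 ^ 2 ≤ r₀ := by nlinarith [mul_nonneg hlam (sq_nonneg (p 2))]
      exact mul_le_mul_of_nonneg_left this hk.le
    have hpb : k * (p' 1 - lam * p 2 ^ 2) ≤ k * r₀ := by
      have : p' 1 - lam * p 2 ^ 2 ≤ r₀ := by nlinarith [mul_nonneg hlam (sq_nonneg (p 2))]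
      exact mul_le_mul_of_nonneg_left this hk.le
    set a := Real.exp (k * (p 1 - lam * p 2 ^ 2)) with ha
    set b := Real.exp (k * (p' 1 - lam * p 2 ^ 2)) with hb
    have ha0 : 0 < a := Real.exp_pos _
    have hb0 : 0 < b := Real.exp_pos _
    have hac : a ≤ Real.exp (k * r₀) := Real.exp_le_exp.mpr hpa
    have hbc : b ≤ Real.exp (k * r₀) := Real.exp_le_exp.mpr hpb
    have hab : a * b ≤ Real.exp (k * r₀) ^ 2 := by
      rw [sq]; exact mul_le_mul hac hbc hb0.le hc0.le
    have habd : (a - b) ^ 2 ≤ Real.exp (k * r₀) ^ 2 * (k * p 1 - k * p' 1) ^ 2 := by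
      have hd := exp_diff_sq_le hpa hpb
      calc (a - b) ^ 2 ≤ Real.exp (k * r₀) ^ 2 *
            ((k * (p 1 - lam * p 2 ^ 2)) - (k * (p' 1 - lam * p 2 ^ 2))) ^ 2 := hd
        _ = Real.exp (k * r₀) ^ 2 * (k * p 1 - k * p' 1) ^ 2 := by ring
    have hk' : k ≠ 0 := ne_of_gt hk
    have hδ : k * p 0 - k * p' 0 = a * Real.sin (k * p 0) - b * Real.sin (k * p' 0) := by
      field_simp at e0
      rw [mul_comm (p 0) k] at e0
      linarith
    have hd : k * p 1 - k * p' 1 = b * Real.cos (k * p' 0) - a * Real.cos (k * p 0) := by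
      field_simp at e2
      linarith
    have hkey : (k * p 0 - k * p' 0) ^ 2 + (k * p 1 - k * p' 1) ^ 2
        = a ^ 2 + b ^ 2 - 2 * a * b * Real.cos (k * p 0 - k * p' 0) := by
      rw [Real.cos_sub]
      linear_combination (k * p 0 - k * p' 0 + (a * Real.sin (k * p 0) - b * Real.sin (k * p' 0))) * hδ
        + (k * p 1 - k * p' 1 + (b * Real.cos (k * p' 0) - a * Real.cos (k * p 0))) * hd
        + a ^ 2 * (Real.sin_sq_add_cos_sq (k * p 0)) + b ^ 2 * (Real.sin_sq_add_cos_sq (k * p' 0))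
    have hcos : 1 - (k * p 0 - k * p' 0) ^ 2 / 2 ≤ Real.cos (k * p 0 - k * p' 0) :=
      Real.one_sub_sq_div_two_le_cos
    have hint1 : 0 ≤ a * b * (Real.cos (k * p 0 - k * p' 0) - (1 - (k * p 0 - k * p' 0) ^ 2 / 2)) :=
      mul_nonneg (mul_pos ha0 hb0).le (sub_nonneg.mpr hcos)
    have hint2 : 0 ≤ (Real.exp (k * r₀) ^ 2 - a * b) * (k * p 0 - k * p' 0) ^ 2 :=
      mul_nonneg (sub_nonneg.mpr hab) (sq_nonneg _)
    obtain ⟨h0', h1'⟩ := contraction_aux hc0 hc1 hkey habd hint1 hint2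
    have hp0 : p 0 = p' 0 := by
      have hz : k * (p 0 - p' 0) = 0 := by linear_combination h0'
      rcases mul_eq_zero.mp hz with h' | h'
      · exact absurd h' hk'
      · linarith
    have hp1 : p 1 = p' 1 := by
      have hz : k * (p 1 - p' 1) = 0 := by linear_combination h1'
      rcases mul_eq_zero.mp hz with h' | h'
      · exact absurd h' hk'
      · linarith
    funext i
    fin_cases i
    exacts [hp0, hp1, e1]
  · -- derivative is a linear isomorphism at every point of `S`
    intro p hp
    have hE0 : 0 < Real.exp (k * (p 1 - lam * (p 2) ^ 2)) := Real.exp_pos _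
    have hE1 : Real.exp (k * (p 1 - lam * (p 2) ^ 2)) < 1 := by
      apply Real.exp_lt_one_iff.mpr
      have h1 : p 1 - lam * (p 2) ^ 2 < 0 := by
        nlinarith [mul_nonneg hlam (sq_nonneg (p 2))]
      exact mul_neg_of_pos_of_neg hk h1
    have hinj : Function.Injective
        ⇑(Lmat
          (row3 (1 - Real.exp (k * (p 1 - lam * (p 2) ^ 2)) * Real.cos (k * p 0))
                (-(Real.exp (k * (p 1 - lam * (p 2) ^ 2)) * Real.sin (k * p 0)))
                (2 * lam * p 2 * (Real.exp (k * (p 1 - lam * (p 2) ^ 2)) * Real.sin (k * p 0))))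
          (row3 0 0 1)
          (row3 (-(Real.exp (k * (p 1 - lam * (p 2) ^ 2)) * Real.sin (k * p 0)))
                (1 + Real.exp (k * (p 1 - lam * (p 2) ^ 2)) * Real.cos (k * p 0))
                (-(2 * lam * p 2 * (Real.exp (k * (p 1 - lam * (p 2) ^ 2)) * Real.cos (k * p 0)))))) :=
      Lmat_inj hE0 hE1 (Real.sin_sq_add_cos_sq (k * p 0)) (Real.neg_one_le_cos (k * p 0))
    set L := Lmat
          (row3 (1 - Real.exp (k * (p 1 - lam * (p 2) ^ 2)) * Real.cos (k * p 0))
                (-(Real.exp (k * (p 1 - lam * (p 2) ^ 2)) * Real.sin (k * p 0)))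
                (2 * lam * p 2 * (Real.exp (k * (p 1 - lam * (p 2) ^ 2)) * Real.sin (k * p 0))))
          (row3 0 0 1)
          (row3 (-(Real.exp (k * (p 1 - lam * (p 2) ^ 2)) * Real.sin (k * p 0)))
                (1 + Real.exp (k * (p 1 - lam * (p 2) ^ 2)) * Real.cos (k * p 0))
                (-(2 * lam * p 2 * (Real.exp (k * (p 1 - lam * (p 2) ^ 2)) * Real.cos (k * p 0))))) with hLdef
    have hinj' : Function.Injective L.toLinearMap := hinj
    refine ⟨(LinearEquiv.ofInjectiveEndo L.toLinearMap hinj').toContinuousLinearEquiv, ?_⟩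
    have hcoe : ((LinearEquiv.ofInjectiveEndo L.toLinearMap hinj').toContinuousLinearEquiv :
        (Fin 3 → ℝ) →L[ℝ] (Fin 3 → ℝ)) = L := ContinuousLinearMap.ext fun v => rfl
    rw [hcoe, hLdef]
    exact phi_hasFDeriv k lam hk.ne' p
end

section
/- Let k > 0, λ ≥ 0, r₀ < 0, and let S = {(q,r,s) ∈ ℝ³ : r ≤ r₀}. For any two distinct points p₁ = (q₁,r₁,s₁) and p₂ = (q₂,r₂,s₂) in S with s₁ = s₂ = s, writing ξᵢ = (qᵢ, rᵢ) ∈ ℝ² and letting F_s(q,r) = (q − (1/k) e^{k(r − f(s))} sin(kq), r + (1/k) e^{k(r − f(s))} cos(kq)) denote the (x,z)-components of Φ at latitude s, one has the lower bound |F_s(ξ₁) − F_s(ξ₂)| ≥ (1 − e^{k(max{r₁,r₂} − f(s))}) |ξ₁ − ξ₂|; in particular F_s is injective on {(q,r) : r ≤ r₀}. -/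
/-- The planar `(x,z)`-components of the time-0 Lagrangian flow map at fixed
latitude `s`, with the plane ℝ² identified with ℂ (`ξ = q + ir`):
`F_s(q,r) = (q − (1/k) e^{k(r − f(s))} sin(kq), r + (1/k) e^{k(r − f(s))} cos(kq))`. -/
noncomputable def Fs (k lam s : ℝ) (ξ : ℂ) : ℂ :=
  Complex.mk
    (ξ.re - (1 / k) * Real.exp (k * (ξ.im - lam * s ^ 2)) * Real.sin (k * ξ.re))
    (ξ.im + (1 / k) * Real.exp (k * (ξ.im - lam * s ^ 2)) * Real.cos (k * ξ.re))

lemma exp_lip_s14 (z w : ℂ) :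
    ‖Complex.exp z - Complex.exp w‖ ≤ max (Real.exp z.re) (Real.exp w.re) * ‖z - w‖ := by
  have key : ∀ t ∈ Set.Icc (0:ℝ) 1,
      HasDerivWithinAt (fun t : ℝ => Complex.exp (w + t • (z - w)))
        (Complex.exp (w + t • (z - w)) * (z - w)) (Set.Icc 0 1) t := by
    intro t ht
    have h1 : HasDerivAt (fun t : ℝ => w + t • (z - w)) (z - w) t := by
      simpa using ((hasDerivAt_id t).smul_const (z - w)).const_add w
    exact (h1.cexp).hasDerivWithinAt
  have bound : ∀ t ∈ Set.Icc (0:ℝ) 1,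
      ‖Complex.exp (w + t • (z - w)) * (z - w)‖
        ≤ max (Real.exp z.re) (Real.exp w.re) * ‖z - w‖ := by
    intro t ht
    obtain ⟨ht0, ht1⟩ := ht
    rw [norm_mul]
    apply mul_le_mul_of_nonneg_right _ (norm_nonneg _)
    rw [Complex.norm_exp]
    have hre : (w + t • (z - w)).re = (1 - t) * w.re + t * z.re := by
      simp [Complex.add_re, Complex.smul_re, Complex.sub_re]; ring
    rw [hre]
    rcases le_total w.re z.re with h | h
    · refine le_max_of_le_left (Real.exp_le_exp.2 ?_); nlinarith
    · refine le_max_of_le_right (Real.exp_le_exp.2 ?_); nlinarith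
  have := Convex.norm_image_sub_le_of_norm_hasDerivWithin_le key bound (convex_Icc 0 1)
    (Set.left_mem_Icc.2 zero_le_one) (Set.right_mem_Icc.2 zero_le_one)
  simpa using this

lemma Fs_eq (k lam s : ℝ) (ξ : ℂ) :
    Fs k lam s ξ = ξ + (Complex.I / k) *
      Complex.exp (Complex.I * k * (starRingEnd ℂ ξ) - (k * (lam * s ^ 2) : ℝ)) := by
  apply Complex.ext <;>
  · simp [Fs, Complex.exp_re, Complex.exp_im, Complex.div_re, Complex.div_im,
      Complex.normSq_apply, mul_sub, mul_comm, Real.exp_sub, ← Complex.ofReal_pow]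
    ring_nf

/-- for `k > 0`, `λ ≥ 0`, `r₀ < 0`, at every latitude `s` and for
all `ξ₁, ξ₂` with `Im ξᵢ ≤ r₀` one has
`|F_s(ξ₁) − F_s(ξ₂)| ≥ (1 − e^{k(max{r₁,r₂} − f(s))}) |ξ₁ − ξ₂|`;
in particular `F_s` is injective on the half-plane `{(q,r) : r ≤ r₀}`. -/
theorem stmt14 (k lam r₀ : ℝ) (hk : 0 < k) (hlam : 0 ≤ lam) (hr₀ : r₀ < 0)
    (s : ℝ) :
    (∀ ξ₁ ξ₂ : ℂ, ξ₁.im ≤ r₀ → ξ₂.im ≤ r₀ →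
      ‖Fs k lam s ξ₁ - Fs k lam s ξ₂‖
        ≥ (1 - Real.exp (k * (max ξ₁.im ξ₂.im - lam * s ^ 2))) * ‖ξ₁ - ξ₂‖) ∧
    Set.InjOn (Fs k lam s) {ξ : ℂ | ξ.im ≤ r₀} := by
  set c : ℝ := lam * s ^ 2 with hc
  have key : ∀ ξ₁ ξ₂ : ℂ, ξ₁.im ≤ r₀ → ξ₂.im ≤ r₀ →
      ‖Fs k lam s ξ₁ - Fs k lam s ξ₂‖
        ≥ (1 - Real.exp (k * (max ξ₁.im ξ₂.im - c))) * ‖ξ₁ - ξ₂‖ := by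
    intro ξ₁ ξ₂ h₁ h₂
    set z₁ : ℂ := Complex.I * k * (starRingEnd ℂ ξ₁) - (k * c : ℝ) with hz₁
    set z₂ : ℂ := Complex.I * k * (starRingEnd ℂ ξ₂) - (k * c : ℝ) with hz₂
    have hdiff : Fs k lam s ξ₁ - Fs k lam s ξ₂
        = (ξ₁ - ξ₂) + (Complex.I / k) * (Complex.exp z₁ - Complex.exp z₂) := by
      rw [Fs_eq, Fs_eq, hz₁, hz₂]; ring
    have hre₁ : z₁.re = k * (ξ₁.im - c) := by
      simp [hz₁, Complex.sub_re, Complex.mul_re]; ring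
    have hre₂ : z₂.re = k * (ξ₂.im - c) := by
      simp [hz₂, Complex.sub_re, Complex.mul_re]; ring
    have hzsub : ‖z₁ - z₂‖ = k * ‖ξ₁ - ξ₂‖ := by
      have : z₁ - z₂ = Complex.I * k * ((starRingEnd ℂ) (ξ₁ - ξ₂)) := by
        rw [hz₁, hz₂, map_sub]; ring
      rw [this, norm_mul, norm_mul, Complex.norm_conj]
      simp [abs_of_pos hk]
    have hmax : max (Real.exp z₁.re) (Real.exp z₂.re)
        = Real.exp (k * (max ξ₁.im ξ₂.im - c)) := by
      rw [hre₁, hre₂]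
      rcases le_total ξ₁.im ξ₂.im with h | h
      · rw [max_eq_right h, max_eq_right (Real.exp_le_exp.2 (by nlinarith))]
      · rw [max_eq_left h, max_eq_left (Real.exp_le_exp.2 (by nlinarith))]
    have hE : ‖Complex.exp z₁ - Complex.exp z₂‖
        ≤ Real.exp (k * (max ξ₁.im ξ₂.im - c)) * (k * ‖ξ₁ - ξ₂‖) := by
      have := exp_lip_s14 z₁ z₂
      rwa [hmax, hzsub] at this
    have hB : ‖(Complex.I / k) * (Complex.exp z₁ - Complex.exp z₂)‖
        ≤ Real.exp (k * (max ξ₁.im ξ₂.im - c)) * ‖ξ₁ - ξ₂‖ := by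
      rw [norm_mul]
      have hIk : ‖(Complex.I / k : ℂ)‖ = 1 / k := by
        simp [norm_div, Complex.norm_real, abs_of_pos hk]
      rw [hIk]
      calc (1 / k) * ‖Complex.exp z₁ - Complex.exp z₂‖
          ≤ (1 / k) * (Real.exp (k * (max ξ₁.im ξ₂.im - c)) * (k * ‖ξ₁ - ξ₂‖)) := by
            apply mul_le_mul_of_nonneg_left hE (by positivity)
        _ = Real.exp (k * (max ξ₁.im ξ₂.im - c)) * ‖ξ₁ - ξ₂‖ := by
            field_simp
    have htri : ‖ξ₁ - ξ₂‖ - ‖(Complex.I / k) * (Complex.exp z₁ - Complex.exp z₂)‖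
        ≤ ‖Fs k lam s ξ₁ - Fs k lam s ξ₂‖ := by
      rw [hdiff]
      have := norm_add_le ((ξ₁ - ξ₂) + (Complex.I / k) * (Complex.exp z₁ - Complex.exp z₂))
        (-((Complex.I / k) * (Complex.exp z₁ - Complex.exp z₂)))
      simp only [add_neg_cancel_right, norm_neg] at this
      linarith
    have : (1 - Real.exp (k * (max ξ₁.im ξ₂.im - c))) * ‖ξ₁ - ξ₂‖
        = ‖ξ₁ - ξ₂‖ - Real.exp (k * (max ξ₁.im ξ₂.im - c)) * ‖ξ₁ - ξ₂‖ := by ring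
    rw [ge_iff_le, this]
    linarith
  refine ⟨key, ?_⟩
  intro ξ₁ h₁ ξ₂ h₂ heq
  have h₁' : ξ₁.im ≤ r₀ := h₁
  have h₂' : ξ₂.im ≤ r₀ := h₂
  have := key ξ₁ ξ₂ h₁' h₂'
  rw [heq, sub_self, norm_zero] at this
  have hlt : Real.exp (k * (max ξ₁.im ξ₂.im - c)) < 1 := by
    rw [← Real.exp_zero]
    apply Real.exp_lt_exp.2
    have hmax : max ξ₁.im ξ₂.im ≤ r₀ := max_le h₁' h₂'
    have hcnn : 0 ≤ c := by positivity
    nlinarith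
  have : ‖ξ₁ - ξ₂‖ ≤ 0 := by nlinarith [norm_nonneg (ξ₁ - ξ₂)]
  have : ξ₁ - ξ₂ = 0 := by
    have := le_antisymm this (norm_nonneg _)
    exact norm_eq_zero.1 this
  exact sub_eq_zero.1 this
end
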